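/- arXiv:2211.00876 — 7 statements merged into one kernel-verified Lean document; each statement's English description precedes it below -/
import Mathlib

section
/- The maximum absolute error of the McCormick relaxation of z = xy over the box [x̲, x̄] × [y̲, ȳ] equals (1/4)(x̄ − x̲)(ȳ − y̲), attained at the midpoint (x, y) = ((x̲+x̄)/2, (y̲+ȳ)/2). -/
lemma min_le_of_sq (p q c : ℝ) (hp : 0 ≤ p) (hq : 0 ≤ q) (hc : 0 ≤ c)
    (h : p * q ≤ c ^ 2) : p ≤ c ∨ q ≤ c := by
  by_contra hcon
  push_neg at hcon
  nlinarith [hcon.1, hcon.2]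

/-- The maximum absolute error `|z - x*y|` of the McCormick relaxation of `z = x*y`
over the box `[xl, xu] × [yl, yu]` equals `(xu - xl) * (yu - yl) / 4`, and it is
attained at the midpoint `(x, y) = ((xl + xu)/2, (yl + yu)/2)`. -/
theorem mccormick_max_error (xl xu yl yu : ℝ) (hx : xl ≤ xu) (hy : yl ≤ yu) :
    IsGreatest {e : ℝ | ∃ x y z : ℝ, x ∈ Set.Icc xl xu ∧ y ∈ Set.Icc yl yu ∧
        xl * y + x * yl - xl * yl ≤ z ∧ xu * y + x * yu - xu * yu ≤ z ∧
        z ≤ xu * y + x * yl - xu * yl ∧ z ≤ xl * y + x * yu - xl * yu ∧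
        e = |z - x * y|}
      ((xu - xl) * (yu - yl) / 4) ∧
    (∃ z : ℝ,
      xl * ((yl + yu) / 2) + ((xl + xu) / 2) * yl - xl * yl ≤ z ∧
      xu * ((yl + yu) / 2) + ((xl + xu) / 2) * yu - xu * yu ≤ z ∧
      z ≤ xu * ((yl + yu) / 2) + ((xl + xu) / 2) * yl - xu * yl ∧
      z ≤ xl * ((yl + yu) / 2) + ((xl + xu) / 2) * yu - xl * yu ∧
      |z - ((xl + xu) / 2) * ((yl + yu) / 2)| = (xu - xl) * (yu - yl) / 4) := by
  have hab : 0 ≤ (xu - xl) * (yu - yl) := mul_nonneg (by linarith) (by linarith)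
  have hc : (0:ℝ) ≤ (xu - xl) * (yu - yl) / 4 := by linarith
  set c := (xu - xl) * (yu - yl) / 4 with hcdef
  have hmid : ∃ z : ℝ,
      xl * ((yl + yu) / 2) + ((xl + xu) / 2) * yl - xl * yl ≤ z ∧
      xu * ((yl + yu) / 2) + ((xl + xu) / 2) * yu - xu * yu ≤ z ∧
      z ≤ xu * ((yl + yu) / 2) + ((xl + xu) / 2) * yl - xu * yl ∧
      z ≤ xl * ((yl + yu) / 2) + ((xl + xu) / 2) * yu - xl * yu ∧
      |z - ((xl + xu) / 2) * ((yl + yu) / 2)| = c := by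
    refine ⟨((xl + xu) / 2) * ((yl + yu) / 2) - c, by simp [hcdef]; ring_nf; nlinarith,
      by simp [hcdef]; nlinarith, by simp [hcdef]; nlinarith, by simp [hcdef]; nlinarith, ?_⟩
    rw [abs_of_nonpos (by linarith)]
    ring
  refine ⟨⟨?_, ?_⟩, hmid⟩
  · obtain ⟨z, h1, h2, h3, h4, h5⟩ := hmid
    exact ⟨(xl + xu) / 2, (yl + yu) / 2, z,
      ⟨by linarith, by linarith⟩, ⟨by linarith, by linarith⟩, h1, h2, h3, h4, h5.symm⟩
  · rintro e ⟨x, y, z, ⟨hx1, hx2⟩, ⟨hy1, hy2⟩, h1, h2, h3, h4, rfl⟩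
    rcases abs_cases (z - x * y) with ⟨he, _⟩ | ⟨he, _⟩ <;> rw [he]
    · -- z - x*y ≤ min ((xu-x)(y-yl), (x-xl)(yu-y))
      have hp : z - x * y ≤ (xu - x) * (y - yl) := by nlinarith
      have hq : z - x * y ≤ (x - xl) * (yu - y) := by nlinarith
      have hprod : (xu - x) * (y - yl) * ((x - xl) * (yu - y)) ≤ c ^ 2 := by
        have h1' : (xu - x) * (x - xl) ≤ ((xu - xl) / 2) ^ 2 := by
          nlinarith [sq_nonneg (xl + xu - 2 * x)]
        have h2' : (y - yl) * (yu - y) ≤ ((yu - yl) / 2) ^ 2 := by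
          nlinarith [sq_nonneg (yl + yu - 2 * y)]
        calc (xu - x) * (y - yl) * ((x - xl) * (yu - y))
            = (xu - x) * (x - xl) * ((y - yl) * (yu - y)) := by ring
          _ ≤ ((xu - xl) / 2) ^ 2 * ((yu - yl) / 2) ^ 2 :=
              mul_le_mul h1' h2' (mul_nonneg (by linarith) (by linarith)) (by positivity)
          _ = c ^ 2 := by rw [hcdef]; ring
      rcases min_le_of_sq _ _ _ (mul_nonneg (by linarith) (by linarith)) (mul_nonneg (by linarith) (by linarith)) hc hprod with h | h <;> linarith
    · have hp : x * y - z ≤ (x - xl) * (y - yl) := by nlinarith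
      have hq : x * y - z ≤ (xu - x) * (yu - y) := by nlinarith
      have hprod : (x - xl) * (y - yl) * ((xu - x) * (yu - y)) ≤ c ^ 2 := by
        have h1' : (x - xl) * (xu - x) ≤ ((xu - xl) / 2) ^ 2 := by
          nlinarith [sq_nonneg (xl + xu - 2 * x)]
        have h2' : (y - yl) * (yu - y) ≤ ((yu - yl) / 2) ^ 2 := by
          nlinarith [sq_nonneg (yl + yu - 2 * y)]
        calc (x - xl) * (y - yl) * ((xu - x) * (yu - y))
            = (x - xl) * (xu - x) * ((y - yl) * (yu - y)) := by ring
          _ ≤ ((xu - xl) / 2) ^ 2 * ((yu - yl) / 2) ^ 2 :=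
              mul_le_mul h1' h2' (mul_nonneg (by linarith) (by linarith)) (by positivity)
          _ = c ^ 2 := by rw [hcdef]; ring
      rcases min_le_of_sq _ _ _ (mul_nonneg (by linarith) (by linarith)) (mul_nonneg (by linarith) (by linarith)) hc hprod with h | h <;> linarith
end

section
/- Define G : [0,1] → [0,1] by G(x) = min{2x, 2(1−x)}, let G^j denote the j-fold composition of G, and define F^L(x) = x − Σ_{j=1}^{L} 2^{−2j} G^j(x). Then F^L is the piecewise linear interpolation of x² at the uniformly spaced breakpoints i/2^L, i = 0, 1, …, 2^L; in particular F^L(i/2^L) = (i/2^L)² for all such i. -/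
/-- The tooth function `G(x) = min (2x) (2(1-x))`. -/
noncomputable def sawG (x : ℝ) : ℝ := min (2 * x) (2 * (1 - x))

/-- The sawtooth approximation `F^L(x) = x - ∑_{j=1}^L 2^{-2j} G^j(x)`. -/
noncomputable def sawF (L : ℕ) (x : ℝ) : ℝ :=
  x - ∑ j ∈ Finset.Icc 1 L, (2 : ℝ) ^ (-(2 * (j : ℤ))) * sawG^[j] x

/-!
Write a point of the `i`-th dyadic interval of level `n` as `(i + s) / 2^n` with `s ∈ [0, 1]`.
Splitting `i = 2k + b` gives `(i + s) / 2^(n+1) = (k + (b + s)/2) / 2^n`. Since `G` is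
symmetric about `1/2`, induction on `n` shows that `G^n` maps the `i`-th interval linearly
onto `[0, 1]`, increasing or decreasing with the parity of `i`. Feeding this into
`F^{L+1} = F^L - 4^{-(L+1)} G^{L+1}` gives `F^L((i + s)/2^L) = ((i + s)/2^L)² + s(1 - s)/4^L`,
and the right-hand side is exactly the secant of `x²` over the interval.
-/

lemma sawG_one_sub (y : ℝ) : sawG (1 - y) = sawG y := by
  simp only [sawG, sub_sub_cancel, min_comm]

lemma sawG_ite_one_sub (p : Prop) [Decidable p] (y : ℝ) :
    sawG (if p then y else 1 - y) = sawG y := by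
  split_ifs
  · rfl
  · exact sawG_one_sub y

lemma sawG_half {s : ℝ} (hs : s ∈ Set.Icc (0 : ℝ) 1) : sawG (s / 2) = s := by
  rw [sawG, min_eq_left (by linarith [hs.2])]
  ring

lemma sawG_one_add_half {s : ℝ} (hs : s ∈ Set.Icc (0 : ℝ) 1) : sawG ((1 + s) / 2) = 1 - s := by
  rw [sawG, min_eq_right (by linarith [hs.1])]
  ring

lemma half_mem_Icc {s : ℝ} (hs : s ∈ Set.Icc (0 : ℝ) 1) : s / 2 ∈ Set.Icc (0 : ℝ) 1 :=
  ⟨by linarith [hs.1], by linarith [hs.2]⟩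

lemma one_add_half_mem_Icc {s : ℝ} (hs : s ∈ Set.Icc (0 : ℝ) 1) :
    (1 + s) / 2 ∈ Set.Icc (0 : ℝ) 1 :=
  ⟨by linarith [hs.1], by linarith [hs.2]⟩

lemma two_mul_add_div_two_pow_succ (n k : ℕ) (s : ℝ) :
    ((2 * k : ℕ) + s) / 2 ^ (n + 1) = (k + s / 2) / 2 ^ n := by
  push_cast
  field_simp
  ring

lemma two_mul_add_one_add_div_two_pow_succ (n k : ℕ) (s : ℝ) :
    ((2 * k + 1 : ℕ) + s) / 2 ^ (n + 1) = (k + (1 + s) / 2) / 2 ^ n := by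
  push_cast
  field_simp
  ring

theorem sawG_iterate_dyadic {n i : ℕ} (hi : i < 2 ^ n) {s : ℝ} (hs : s ∈ Set.Icc (0 : ℝ) 1) :
    sawG^[n] ((i + s) / 2 ^ n) = if Even i then s else 1 - s := by
  induction n generalizing i s with
  | zero =>
    obtain rfl : i = 0 := by simpa using hi
    simp
  | succ n ih =>
    rw [Function.iterate_succ_apply']
    obtain ⟨k, rfl | rfl⟩ := Nat.even_or_odd' i
    · rw [two_mul_add_div_two_pow_succ, ih (by omega) (half_mem_Icc hs), sawG_ite_one_sub, sawG_half hs,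
        if_pos (even_two_mul k)]
    · rw [two_mul_add_one_add_div_two_pow_succ, ih (by omega) (one_add_half_mem_Icc hs), sawG_ite_one_sub,
        sawG_one_add_half hs, if_neg (Nat.not_even_iff_odd.mpr (odd_two_mul_add_one k))]

lemma sawG_iterate_succ_dyadic {n i : ℕ} (hi : i < 2 ^ n) {s : ℝ}
    (hs : s ∈ Set.Icc (0 : ℝ) 1) : sawG^[n + 1] ((i + s) / 2 ^ n) = sawG s := by
  rw [Function.iterate_succ_apply', sawG_iterate_dyadic hi hs, sawG_ite_one_sub]

lemma sawG_iterate_one {n : ℕ} (hn : 1 ≤ n) : sawG^[n] 1 = 0 := by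
  obtain ⟨m, rfl⟩ := Nat.exists_eq_add_of_le' hn
  rw [Function.iterate_succ_apply, show sawG 1 = 0 by norm_num [sawG],
    Function.iterate_fixed (by norm_num [sawG] : sawG 0 = 0)]

lemma two_zpow_neg_two_mul (j : ℕ) : (2 : ℝ) ^ (-(2 * (j : ℤ))) = (4 ^ j)⁻¹ := by
  rw [zpow_neg, show 2 * (j : ℤ) = ((2 * j : ℕ) : ℤ) by push_cast; rfl, zpow_natCast, pow_mul]
  norm_num

lemma sawF_zero (x : ℝ) : sawF 0 x = x := by
  simp [sawF]

lemma sawF_succ (L : ℕ) (x : ℝ) :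
    sawF (L + 1) x = sawF L x - sawG^[L + 1] x / 4 ^ (L + 1) := by
  rw [sawF, sawF, Finset.sum_Icc_succ_top (by omega), two_zpow_neg_two_mul]
  ring

lemma sawF_one (L : ℕ) : sawF L 1 = 1 := by
  rw [sawF, Finset.sum_eq_zero fun j hj => by
    rw [sawG_iterate_one (Finset.mem_Icc.mp hj).1, mul_zero], sub_zero]

theorem sawF_dyadic {L i : ℕ} (hi : i < 2 ^ L) {s : ℝ} (hs : s ∈ Set.Icc (0 : ℝ) 1) :
    sawF L ((i + s) / 2 ^ L) = ((i + s) / 2 ^ L) ^ 2 + s * (1 - s) / 4 ^ L := by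
  induction L generalizing i s with
  | zero =>
    obtain rfl : i = 0 := by simpa using hi
    rw [sawF_zero]
    ring
  | succ L ih =>
    rw [sawF_succ]
    obtain ⟨k, rfl | rfl⟩ := Nat.even_or_odd' i
    · rw [two_mul_add_div_two_pow_succ, ih (by omega) (half_mem_Icc hs),
        sawG_iterate_succ_dyadic (by omega) (half_mem_Icc hs), sawG_half hs]
      field_simp
      ring
    · rw [two_mul_add_one_add_div_two_pow_succ, ih (by omega) (one_add_half_mem_Icc hs),
        sawG_iterate_succ_dyadic (by omega) (one_add_half_mem_Icc hs), sawG_one_add_half hs]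
      field_simp
      ring

/-- `F^L` is the piecewise linear interpolation of `x²` at the uniformly spaced
breakpoints `i / 2^L`, `i = 0, …, 2^L`: it agrees with `x²` at each breakpoint and
on each interval `[i/2^L, (i+1)/2^L]` it coincides with the secant line of `x²`
through the two endpoints. -/
theorem sawF_interpolates (L : ℕ) :
    (∀ i : ℕ, i ≤ 2 ^ L → sawF L ((i : ℝ) / 2 ^ L) = ((i : ℝ) / 2 ^ L) ^ 2) ∧
    (∀ i : ℕ, i < 2 ^ L → ∀ x ∈ Set.Icc ((i : ℝ) / 2 ^ L) (((i : ℝ) + 1) / 2 ^ L),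
      sawF L x =
        ((i : ℝ) / 2 ^ L + ((i : ℝ) + 1) / 2 ^ L) * x -
          ((i : ℝ) / 2 ^ L) * (((i : ℝ) + 1) / 2 ^ L)) := by
  have hpow : (0 : ℝ) < 2 ^ L := by positivity
  constructor
  · intro i hi
    rcases hi.lt_or_eq with hi | rfl
    · simpa using sawF_dyadic hi (s := 0) (by simp)
    · rw [Nat.cast_pow, Nat.cast_ofNat, div_self hpow.ne', sawF_one, one_pow]
  · rintro i hi x ⟨hxi, hxi'⟩
    set s := 2 ^ L * x - i
    have hs : s ∈ Set.Icc (0 : ℝ) 1 := by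
      constructor <;> [rw [div_le_iff₀ hpow] at hxi; rw [le_div_iff₀ hpow] at hxi'] <;> linarith
    have hx : x = (i + s) / 2 ^ L := by field_simp; ring
    rw [hx, sawF_dyadic hi hs, show (4 : ℝ) ^ L = (2 ^ L) ^ 2 by rw [pow_right_comm]; norm_num]
    field_simp
    ring
end

section
/- Let n, m ≥ 1 and consider nonnegative reals l_{x,1},…,l_{x,n} with Σ l_{x,i} = 1 and l_{y,1},…,l_{y,m} with Σ l_{y,j} = 1. Then the minimum of (1/6)·Σ_{i=1}^n Σ_{j=1}^m (l_{x,i} l_{y,j}³ + l_{y,j} l_{x,i}³) over all such choices is attained at the uniform choice l_{x,i} = 1/n and l_{y,j} = 1/m, with minimum value (1/6)(1/m² + 1/n²). -/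
lemma cube_sum_lb {k : ℕ} (hk : 1 ≤ k) (f : Fin k → ℝ) (hf : ∀ i, 0 ≤ f i)
    (hsum : (∑ i, f i) = 1) : 1 / (k : ℝ) ^ 2 ≤ ∑ i, f i ^ 3 := by
  have h := pow_sum_div_card_le_sum_pow (s := Finset.univ) (f := f)
    (fun i _ => hf i) 2
  simpa [hsum, Finset.card_univ] using h

/-- Minimizing the average error `(1/6) ∑_i ∑_j (l_{x,i} l_{y,j}³ + l_{y,j} l_{x,i}³)`
of the HybS piecewise relaxation over all breakpoint placements (nonnegative segment
lengths summing to one in each coordinate): the minimum value is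
`(1/6)(1/m² + 1/n²)` and it is attained at the uniform choice
`l_{x,i} = 1/n`, `l_{y,j} = 1/m`. -/
theorem hybs_uniform_breakpoints_optimal (n m : ℕ) (hn : 1 ≤ n) (hm : 1 ≤ m) :
    IsLeast {v : ℝ | ∃ s : Fin n → ℝ, ∃ t : Fin m → ℝ,
        (∀ i, 0 ≤ s i) ∧ (∀ j, 0 ≤ t j) ∧
        (∑ i, s i) = 1 ∧ (∑ j, t j) = 1 ∧
        v = (1 / 6) * ∑ i, ∑ j, (s i * (t j) ^ 3 + t j * (s i) ^ 3)}
      ((1 / 6) * (1 / (m : ℝ) ^ 2 + 1 / (n : ℝ) ^ 2)) ∧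
    (1 / 6) * (∑ _i : Fin n, ∑ _j : Fin m,
        ((1 / (n : ℝ)) * (1 / (m : ℝ)) ^ 3 + (1 / (m : ℝ)) * (1 / (n : ℝ)) ^ 3)) =
      (1 / 6) * (1 / (m : ℝ) ^ 2 + 1 / (n : ℝ) ^ 2) := by
  have hn' : (0 : ℝ) < n := by exact_mod_cast hn
  have hm' : (0 : ℝ) < m := by exact_mod_cast hm
  have hval : (1 / 6 : ℝ) * (∑ _i : Fin n, ∑ _j : Fin m,
        ((1 / (n : ℝ)) * (1 / (m : ℝ)) ^ 3 + (1 / (m : ℝ)) * (1 / (n : ℝ)) ^ 3)) =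
      (1 / 6) * (1 / (m : ℝ) ^ 2 + 1 / (n : ℝ) ^ 2) := by
    simp [Finset.sum_const, Finset.card_univ]
    field_simp
  refine ⟨⟨⟨fun _ => 1 / n, fun _ => 1 / m, fun _ => by positivity, fun _ => by positivity,
      ?_, ?_, hval.symm⟩, ?_⟩, hval⟩
  · simp [Finset.sum_const, Finset.card_univ]
    field_simp
  · simp [Finset.sum_const, Finset.card_univ]
    field_simp
  · rintro v ⟨s, t, hs, ht, hs1, ht1, rfl⟩
    have key : (∑ i, ∑ j, (s i * (t j) ^ 3 + t j * (s i) ^ 3))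
        = (∑ j, (t j) ^ 3) + (∑ i, (s i) ^ 3) := by
      simp only [Finset.sum_add_distrib, ← Finset.mul_sum, ← Finset.sum_mul, ht1, hs1,
        one_mul, mul_one]
    rw [key]
    have h1 := cube_sum_lb hn s hs hs1
    have h2 := cube_sum_lb hm t ht ht1
    nlinarith
end

section
/- The volume (3-dimensional Lebesgue measure) of the McCormick envelope of z = xy over the box [x̲, x̄] × [y̲, ȳ], i.e., the set of (x, y, z) satisfying all four McCormick inequalities, equals (1/6)(x̄ − x̲)²(ȳ − y̲)². -/
/-!
Between its two lower and two upper planes, the McCormick envelope has height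
`min ((x̄ - x̲) * tent y) ((ȳ - y̲) * tent x)`, where `tent` is the distance to the nearer endpoint
of the interval: the envelope is a pyramid over the box, of apex height `(x̄ - x̲)(ȳ - y̲)/2`, so its
volume is `(1/3) (x̄ - x̲)(ȳ - y̲) · (x̄ - x̲)(ȳ - y̲)/2`. Concretely, the height integrates to
`Q (ȳ - y̲) - Q² / (x̄ - x̲)` along a line of constant `x`, with `Q = (ȳ - y̲) tent x`, and both
integrations reduce, by the symmetry of `tent` about the midpoint, to integrals over `[0, ℓ/2]`.
-/

open MeasureTheory Set

def tent (a b t : ℝ) : ℝ := min (t - a) (b - t)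

lemma tent_nonneg {a b t : ℝ} (ht : t ∈ Icc a b) : 0 ≤ tent a b t :=
  le_min (sub_nonneg.2 ht.1) (sub_nonneg.2 ht.2)

lemma tent_le_half (a b t : ℝ) : tent a b t ≤ (b - a) / 2 := by
  unfold tent
  linarith [min_le_left (t - a) (b - t), min_le_right (t - a) (b - t)]

lemma integral_comp_tent {f : ℝ → ℝ} (hf : Continuous f) {a b : ℝ} (hab : a ≤ b) :
    ∫ t in a..b, f (tent a b t) = 2 * ∫ s in 0..(b - a) / 2, f s := by
  set m := (a + b) / 2 with hm
  have ham : a ≤ m := by linarith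
  have hmb : m ≤ b := by linarith
  have hcont : Continuous fun t => f (tent a b t) := hf.comp (by unfold tent; fun_prop)
  rw [← intervalIntegral.integral_add_adjacent_intervals (b := m)
    (hcont.intervalIntegrable _ _) (hcont.intervalIntegrable _ _)]
  have left : ∫ t in a..m, f (tent a b t) = ∫ t in a..m, f (t - a) :=
    intervalIntegral.integral_congr fun t ht => by
      rw [uIcc_of_le ham] at ht
      rw [tent, min_eq_left (by linarith [ht.2])]
  have right : ∫ t in m..b, f (tent a b t) = ∫ t in m..b, f (b - t) :=
    intervalIntegral.integral_congr fun t ht => by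
      rw [uIcc_of_le hmb] at ht
      rw [tent, min_eq_right (by linarith [ht.1])]
  rw [left, right, intervalIntegral.integral_comp_sub_right,
    intervalIntegral.integral_comp_sub_left, sub_self, two_mul]
  congr 2 <;> ring

lemma integral_min_mul_const {k Q h : ℝ} (hk : 0 ≤ k) (hQ : 0 ≤ Q) (hQh : Q ≤ k * h) :
    ∫ s in 0..h, min (k * s) Q = Q * h - Q ^ 2 / (2 * k) := by
  rcases hk.eq_or_lt with rfl | hk
  · obtain rfl : Q = 0 := by linarith
    simp
  have hc : Q / k ≤ h := by rwa [div_le_iff₀' hk]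
  have hcont : Continuous fun s => min (k * s) Q := by fun_prop
  rw [← intervalIntegral.integral_add_adjacent_intervals (b := Q / k)
    (hcont.intervalIntegrable _ _) (hcont.intervalIntegrable _ _)]
  have below : ∫ s in 0..Q / k, min (k * s) Q = ∫ s in 0..Q / k, k * s :=
    intervalIntegral.integral_congr fun s hs => by
      rw [uIcc_of_le (by positivity)] at hs
      exact min_eq_left ((le_div_iff₀' hk).1 hs.2)
  have above : ∫ s in Q / k..h, min (k * s) Q = ∫ s in Q / k..h, Q :=
    intervalIntegral.integral_congr fun s hs => by
      rw [uIcc_of_le hc] at hs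
      exact min_eq_right ((div_le_iff₀' hk).1 hs.1)
  rw [below, above, intervalIntegral.integral_const_mul, integral_id,
    intervalIntegral.integral_const, smul_eq_mul]
  field_simp
  ring

lemma integral_min_mul_tent {a b k Q : ℝ} (hab : a ≤ b) (hk : 0 ≤ k) (hQ : 0 ≤ Q)
    (hQk : Q ≤ k * ((b - a) / 2)) :
    ∫ t in a..b, min (k * tent a b t) Q = Q * (b - a) - Q ^ 2 / k := by
  rw [integral_comp_tent (f := fun s => min (k * s) Q) (by fun_prop) hab,
    integral_min_mul_const hk hQ hQk]
  ring

lemma integral_integral_min_mul_tent {a b c d : ℝ} (hab : a ≤ b) (hcd : c ≤ d) :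
    ∫ x in a..b, ∫ y in c..d, min ((b - a) * tent c d y) ((d - c) * tent a b x) =
      (b - a) ^ 2 * (d - c) ^ 2 / 6 := by
  have inner : ∀ x ∈ uIcc a b, ∫ y in c..d, min ((b - a) * tent c d y) ((d - c) * tent a b x) =
      (d - c) ^ 2 * tent a b x - (d - c) ^ 2 / (b - a) * tent a b x ^ 2 := by
    intro x hx
    rw [uIcc_of_le hab] at hx
    have hQ : (d - c) * tent a b x ≤ (b - a) * ((d - c) / 2) :=
      (mul_le_mul_of_nonneg_left (tent_le_half a b x) (sub_nonneg.2 hcd)).trans_eq (by ring)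
    rw [integral_min_mul_tent hcd (sub_nonneg.2 hab)
      (mul_nonneg (sub_nonneg.2 hcd) (tent_nonneg hx)) hQ]
    ring
  have hsq : ∀ s t : ℝ, IntervalIntegrable (fun x : ℝ => x ^ 2) volume s t :=
    fun s t => (continuous_pow 2).intervalIntegrable s t
  rw [intervalIntegral.integral_congr inner,
    integral_comp_tent (f := fun s => (d - c) ^ 2 * s - (d - c) ^ 2 / (b - a) * s ^ 2)
      (by fun_prop) hab,
    intervalIntegral.integral_sub (intervalIntegral.intervalIntegrable_id.const_mul _)
      ((hsq _ _).const_mul _),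
    intervalIntegral.integral_const_mul, intervalIntegral.integral_const_mul, integral_id,
    integral_pow]
  rcases hab.eq_or_lt with rfl | hab
  · simp
  · field_simp
    ring

theorem volume_region_between_cc_eq_integral {α : Type*} [MeasurableSpace α] {μ : Measure α}
    [SFinite μ] {f g : α → ℝ} {s : Set α} (hf : Measurable f) (hg : Measurable g)
    (hs : MeasurableSet s) (hint : IntegrableOn (g - f) s μ) (hfg : ∀ x ∈ s, f x ≤ g x) :
    μ.prod volume {p : α × ℝ | p.1 ∈ s ∧ p.2 ∈ Icc (f p.1) (g p.1)} =
      ENNReal.ofReal (∫ x in s, (g - f) x ∂μ) := by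
  have slice : ∀ x, volume (Prod.mk x ⁻¹' {p : α × ℝ | p.1 ∈ s ∧ p.2 ∈ Icc (f p.1) (g p.1)}) =
      s.indicator (fun x => ENNReal.ofReal ((g - f) x)) x := by
    intro x
    by_cases hx : x ∈ s
    · simp only [preimage_ofPred_eq, hx, true_and, ofPred_mem_eq, indicator_of_mem]
      exact Real.volume_Icc
    · simp [hx]
  rw [Measure.prod_apply (measurableSet_region_between_cc hf hg hs), lintegral_congr slice,
    lintegral_indicator hs, ofReal_integral_eq_lintegral_ofReal hint]
  exact (ae_restrict_iff' hs).2 (ae_of_all _ fun x hx => sub_nonneg.2 (hfg x hx))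

section McCormick

variable (xl xu yl yu : ℝ)

def mcCormickLower (p : ℝ × ℝ) : ℝ :=
  max (xl * p.2 + p.1 * yl - xl * yl) (xu * p.2 + p.1 * yu - xu * yu)

def mcCormickUpper (p : ℝ × ℝ) : ℝ :=
  min (xu * p.2 + p.1 * yl - xu * yl) (xl * p.2 + p.1 * yu - xl * yu)

variable {xl xu yl yu}

lemma mcCormickUpper_sub_mcCormickLower (hx : xl ≤ xu) (hy : yl ≤ yu) (p : ℝ × ℝ) :
    mcCormickUpper xl xu yl yu p - mcCormickLower xl xu yl yu p =
      min ((xu - xl) * tent yl yu p.2) ((yu - yl) * tent xl xu p.1) := by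
  -- each of the four differences of an upper and a lower plane factors as one of the products
  rw [mcCormickUpper, mcCormickLower, ← min_sub_sub_right, ← min_sub_sub_left,
    ← min_sub_sub_left, tent, tent, mul_min_of_nonneg _ _ (sub_nonneg.2 hx),
    mul_min_of_nonneg _ _ (sub_nonneg.2 hy)]
  ring_nf
  ac_rfl

end McCormick

/-- The volume (3-dimensional Lebesgue measure) of the McCormick envelope of
`z = x * y` over the box `[xl, xu] × [yl, yu]` equals
`(xu - xl)² (yu - yl)² / 6`. -/
theorem mccormick_envelope_volume (xl xu yl yu : ℝ) (hx : xl ≤ xu) (hy : yl ≤ yu) :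
    volume {p : ℝ × ℝ × ℝ |
        p.1 ∈ Set.Icc xl xu ∧ p.2.1 ∈ Set.Icc yl yu ∧
        xl * p.2.1 + p.1 * yl - xl * yl ≤ p.2.2 ∧
        xu * p.2.1 + p.1 * yu - xu * yu ≤ p.2.2 ∧
        p.2.2 ≤ xu * p.2.1 + p.1 * yl - xu * yl ∧
        p.2.2 ≤ xl * p.2.1 + p.1 * yu - xl * yu} =
      ENNReal.ofReal ((xu - xl) ^ 2 * (yu - yl) ^ 2 / 6) := by
  have hL : Continuous (mcCormickLower xl xu yl yu) := by unfold mcCormickLower; fun_prop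
  have hU : Continuous (mcCormickUpper xl xu yl yu) := by unfold mcCormickUpper; fun_prop
  have box : IsCompact (Icc xl xu ×ˢ Icc yl yu) := isCompact_Icc.prod isCompact_Icc
  have hint := (hU.sub hL).continuousOn.integrableOn_compact (μ := volume) box
  have hle : ∀ p ∈ Icc xl xu ×ˢ Icc yl yu,
      mcCormickLower xl xu yl yu p ≤ mcCormickUpper xl xu yl yu p := fun p hp => by
    rw [← sub_nonneg, mcCormickUpper_sub_mcCormickLower hx hy]
    exact le_min (mul_nonneg (sub_nonneg.2 hx) (tent_nonneg hp.2))
      (mul_nonneg (sub_nonneg.2 hy) (tent_nonneg hp.1))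
  rw [← volume_preserving_prodAssoc.measure_preimage_equiv, Measure.volume_eq_prod,
    ← integral_integral_min_mul_tent hx hy]
  convert volume_region_between_cc_eq_integral hL.measurable hU.measurable box.measurableSet
    hint hle using 2
  · ext ⟨⟨x, y⟩, z⟩
    simp only [MeasurableEquiv.prodAssoc, MeasurableEquiv.coe_mk, Equiv.prodAssoc_apply,
      preimage_ofPred_eq, mem_ofPred_eq, mem_prod, mem_Icc, mcCormickLower, mcCormickUpper,
      max_le_iff, le_min_iff]
    tauto
  · rw [Measure.volume_eq_prod, setIntegral_prod _ hint]
    simp_rw [Pi.sub_apply, mcCormickUpper_sub_mcCormickLower hx hy,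
      integral_Icc_eq_integral_Ioc, ← intervalIntegral.integral_of_le hx,
      ← intervalIntegral.integral_of_le hy]
end

section
/- Define on [x̲, x̄] × [y̲, ȳ] the functions C₂^L(x,y) = (1/2)((x+y)² − (x̄+x̲)x + x̄x̲ − (ȳ+y̲)y + ȳy̲) and C₃^U(x,y) = (1/2)((x̲+x̄)x − x̲x̄ + (y̲+ȳ)y − y̲ȳ − (x−y)²). Then ∫∫ over the box of (C₃^U − C₂^L) dy dx equals (1/6)(l_x l_y³ + l_y l_x³), where l_x = x̄ − x̲ and l_y = ȳ − y̲. -/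
lemma int_quad (a b c p q : ℝ) :
    (∫ y in p..q, (a * y ^ 2 + b * y + c)) =
      a * (q ^ 3 - p ^ 3) / 3 + b * (q ^ 2 - p ^ 2) / 2 + c * (q - p) := by
  have hd : ∀ y : ℝ, HasDerivAt (fun y : ℝ => a * y ^ 3 / 3 + b * y ^ 2 / 2 + c * y)
      (a * y ^ 2 + b * y + c) y := by
    intro y
    have h1 : HasDerivAt (fun y : ℝ => a * y ^ 3 / 3) (a * (3 * y ^ 2) / 3) y := by
      exact (((hasDerivAt_pow 3 y).const_mul a).div_const 3).congr_deriv (by ring)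
    have h2 : HasDerivAt (fun y : ℝ => b * y ^ 2 / 2) (b * (2 * y) / 2) y := by
      exact (((hasDerivAt_pow 2 y).const_mul b).div_const 2).congr_deriv (by ring)
    have h3 : HasDerivAt (fun y : ℝ => c * y) c y := by
      simpa using (hasDerivAt_id y).const_mul c
    exact ((h1.add h2).add h3).congr_deriv (by ring)
  rw [intervalIntegral.integral_eq_sub_of_hasDerivAt (fun y _ => hd y)
    ((Continuous.intervalIntegrable (by continuity) p q))]
  ring

/-- The volume of the limit HybS LP relaxation: the double integral over the box
`[xl, xu] × [yl, yu]` of the gap between the concave overestimator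
`C₃^U(x,y) = ½((xl+xu)x - xl·xu + (yl+yu)y - yl·yu - (x-y)²)` and the convex
underestimator `C₂^L(x,y) = ½((x+y)² - (xu+xl)x + xu·xl - (yu+yl)y + yu·yl)`
equals `(1/6)(l_x l_y³ + l_y l_x³)` with `l_x = xu - xl`, `l_y = yu - yl`. -/
theorem hybs_lp_volume (xl xu yl yu : ℝ) (hx : xl ≤ xu) (hy : yl ≤ yu) :
    (∫ x in xl..xu, ∫ y in yl..yu,
        ((1 / 2) * ((xl + xu) * x - xl * xu + (yl + yu) * y - yl * yu - (x - y) ^ 2) -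
         (1 / 2) * ((x + y) ^ 2 - (xu + xl) * x + xu * xl - (yu + yl) * y + yu * yl))) =
      (1 / 6) * ((xu - xl) * (yu - yl) ^ 3 + (yu - yl) * (xu - xl) ^ 3) := by
  have hinner : ∀ x : ℝ, (∫ y in yl..yu,
      ((1 / 2) * ((xl + xu) * x - xl * xu + (yl + yu) * y - yl * yu - (x - y) ^ 2) -
       (1 / 2) * ((x + y) ^ 2 - (xu + xl) * x + xu * xl - (yu + yl) * y + yu * yl))) =
      (-1) * (yu ^ 3 - yl ^ 3) / 3 + (yl + yu) * (yu ^ 2 - yl ^ 2) / 2 +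
        (-x ^ 2 + (xl + xu) * x - xl * xu - yl * yu) * (yu - yl) := by
    intro x
    rw [show (fun y : ℝ =>
        (1 / 2) * ((xl + xu) * x - xl * xu + (yl + yu) * y - yl * yu - (x - y) ^ 2) -
        (1 / 2) * ((x + y) ^ 2 - (xu + xl) * x + xu * xl - (yu + yl) * y + yu * yl)) =
        fun y : ℝ => (-1) * y ^ 2 + (yl + yu) * y +
          (-x ^ 2 + (xl + xu) * x - xl * xu - yl * yu) from funext fun y => by ring]
    rw [int_quad]
  simp_rw [hinner]
  rw [show (fun x : ℝ => (-1) * (yu ^ 3 - yl ^ 3) / 3 + (yl + yu) * (yu ^ 2 - yl ^ 2) / 2 +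
      (-x ^ 2 + (xl + xu) * x - xl * xu - yl * yu) * (yu - yl)) =
      fun x : ℝ => (-(yu - yl)) * x ^ 2 + ((xl + xu) * (yu - yl)) * x +
        ((-1) * (yu ^ 3 - yl ^ 3) / 3 + (yl + yu) * (yu ^ 2 - yl ^ 2) / 2 +
          (-xl * xu - yl * yu) * (yu - yl)) from funext fun x => by ring]
  rw [int_quad]
  ring
end

section
/- On the box [x̲,x̄] × [y̲,ȳ] with side lengths l_x, l_y > 0, the difference of LP-relaxation volumes between the Bin2 relaxation and the HybS relaxation equals (1/4) l_x² l_y²; i.e., ∫∫ (C₂^U − C₂^L) dy dx − ∫∫ (C₃^U − C₂^L) dy dx = (1/4) l_x² l_y² > 0, so the HybS LP relaxation is strictly tighter in volume. -/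
lemma quad_integral (a b c lo hi : ℝ) :
    (∫ t in lo..hi, (a + b * t + c * t ^ 2)) =
      a * (hi - lo) + b / 2 * (hi ^ 2 - lo ^ 2) + c / 3 * (hi ^ 3 - lo ^ 3) := by
  have key : ∀ t ∈ Set.uIcc lo hi,
      HasDerivAt (fun t : ℝ => a * t + b / 2 * t ^ 2 + c / 3 * t ^ 3)
        (a + b * t + c * t ^ 2) t := by
    intro t _
    have h : HasDerivAt (fun t : ℝ => a * t + b / 2 * t ^ 2 + c / 3 * t ^ 3)
        (a * 1 + b / 2 * (2 * t ^ 1) + c / 3 * (3 * t ^ 2)) t := by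
      exact (((hasDerivAt_id t).const_mul a).add ((hasDerivAt_pow 2 t).const_mul (b / 2))).add
        ((hasDerivAt_pow 3 t).const_mul (c / 3))
    convert h using 1; ring
  have hi' : IntervalIntegrable (fun t : ℝ => a + b * t + c * t ^ 2) MeasureTheory.volume lo hi := by
    apply Continuous.intervalIntegrable; continuity
  rw [intervalIntegral.integral_eq_sub_of_hasDerivAt key hi']
  ring

/-- The HybS LP relaxation is strictly tighter in volume than Bin2: with
`C₂^L(x,y) = ½((x+y)² - (xu+xl)x + xu·xl - (yu+yl)y + yu·yl)`,
`C₂^U(x,y) = ½((xl+xu+yl+yu)(x+y) - (xl+yl)(xu+yu) - x² - y²)`,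
`C₃^U(x,y) = ½((xl+xu)x - xl·xu + (yl+yu)y - yl·yu - (x-y)²)`,
the difference of the two LP-relaxation volumes over `[xl, xu] × [yl, yu]`
equals `(1/4) l_x² l_y²`, which is strictly positive (with `l_x = xu - xl > 0`,
`l_y = yu - yl > 0`). -/
theorem hybs_strictly_tighter_than_bin2 (xl xu yl yu : ℝ)
    (hx : xl < xu) (hy : yl < yu) :
    (∫ x in xl..xu, ∫ y in yl..yu,
        ((1 / 2) * ((xl + xu + yl + yu) * (x + y) - (xl + yl) * (xu + yu) - x ^ 2 - y ^ 2) -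
         (1 / 2) * ((x + y) ^ 2 - (xu + xl) * x + xu * xl - (yu + yl) * y + yu * yl))) -
      (∫ x in xl..xu, ∫ y in yl..yu,
        ((1 / 2) * ((xl + xu) * x - xl * xu + (yl + yu) * y - yl * yu - (x - y) ^ 2) -
         (1 / 2) * ((x + y) ^ 2 - (xu + xl) * x + xu * xl - (yu + yl) * y + yu * yl))) =
      (1 / 4) * (xu - xl) ^ 2 * (yu - yl) ^ 2 ∧
    0 < (1 / 4) * (xu - xl) ^ 2 * (yu - yl) ^ 2 := by
  constructor
  · have inner1 : ∀ x : ℝ, (∫ y in yl..yu,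
        ((1 / 2) * ((xl + xu + yl + yu) * (x + y) - (xl + yl) * (xu + yu) - x ^ 2 - y ^ 2) -
         (1 / 2) * ((x + y) ^ 2 - (xu + xl) * x + xu * xl - (yu + yl) * y + yu * yl))) =
        (-yl * yu - (1/2) * xu * yl - (1/2) * xl * yu - xl * xu + (1/2) * x * yu
          + (1/2) * x * yl + x * xu + x * xl - x ^ 2) * (yu - yl)
        + (yu + yl + (1/2) * xu + (1/2) * xl - x) / 2 * (yu ^ 2 - yl ^ 2)
        + (-1) / 3 * (yu ^ 3 - yl ^ 3) := by
      intro x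
      rw [show (fun y : ℝ =>
          ((1 / 2) * ((xl + xu + yl + yu) * (x + y) - (xl + yl) * (xu + yu) - x ^ 2 - y ^ 2) -
           (1 / 2) * ((x + y) ^ 2 - (xu + xl) * x + xu * xl - (yu + yl) * y + yu * yl))) =
        (fun y : ℝ =>
          (-yl * yu - (1/2) * xu * yl - (1/2) * xl * yu - xl * xu + (1/2) * x * yu
            + (1/2) * x * yl + x * xu + x * xl - x ^ 2)
          + (yu + yl + (1/2) * xu + (1/2) * xl - x) * y + (-1) * y ^ 2) from funext fun y => by ring]
      exact quad_integral _ _ _ _ _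
    have inner2 : ∀ x : ℝ, (∫ y in yl..yu,
        ((1 / 2) * ((xl + xu) * x - xl * xu + (yl + yu) * y - yl * yu - (x - y) ^ 2) -
         (1 / 2) * ((x + y) ^ 2 - (xu + xl) * x + xu * xl - (yu + yl) * y + yu * yl))) =
        (-yl * yu - xl * xu + x * xu + x * xl - x ^ 2) * (yu - yl)
        + (yu + yl) / 2 * (yu ^ 2 - yl ^ 2)
        + (-1) / 3 * (yu ^ 3 - yl ^ 3) := by
      intro x
      rw [show (fun y : ℝ =>
          ((1 / 2) * ((xl + xu) * x - xl * xu + (yl + yu) * y - yl * yu - (x - y) ^ 2) -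
           (1 / 2) * ((x + y) ^ 2 - (xu + xl) * x + xu * xl - (yu + yl) * y + yu * yl))) =
        (fun y : ℝ =>
          (-yl * yu - xl * xu + x * xu + x * xl - x ^ 2)
          + (yu + yl) * y + (-1) * y ^ 2) from funext fun y => by ring]
      exact quad_integral _ _ _ _ _
    simp only [inner1, inner2]
    rw [show (fun x : ℝ =>
        (-yl * yu - (1/2) * xu * yl - (1/2) * xl * yu - xl * xu + (1/2) * x * yu
          + (1/2) * x * yl + x * xu + x * xl - x ^ 2) * (yu - yl)
        + (yu + yl + (1/2) * xu + (1/2) * xl - x) / 2 * (yu ^ 2 - yl ^ 2)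
        + (-1) / 3 * (yu ^ 3 - yl ^ 3)) =
      (fun x : ℝ =>
        ((1/6) * yu ^ 3 - (1/2) * yl * yu ^ 2 + (1/2) * yl ^ 2 * yu - (1/6) * yl ^ 3
          + (1/4) * xu * yu ^ 2 - (1/2) * xu * yl * yu + (1/4) * xu * yl ^ 2
          - (1/4) * xl * yu ^ 2 + (1/2) * xl * yl * yu - (1/4) * xl * yl ^ 2
          - xl * xu * yu + xl * xu * yl)
        + (xu * yu - xu * yl + xl * yu - xl * yl) * x
        + (-(yu) + yl) * x ^ 2) from funext fun x => by ring]
    rw [show (fun x : ℝ =>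
        (-yl * yu - xl * xu + x * xu + x * xl - x ^ 2) * (yu - yl)
        + (yu + yl) / 2 * (yu ^ 2 - yl ^ 2)
        + (-1) / 3 * (yu ^ 3 - yl ^ 3)) =
      (fun x : ℝ =>
        ((1/6) * yu ^ 3 - (1/2) * yl * yu ^ 2 + (1/2) * yl ^ 2 * yu - (1/6) * yl ^ 3
          - xl * xu * yu + xl * xu * yl)
        + (xu * yu - xu * yl + xl * yu - xl * yl) * x
        + (-(yu) + yl) * x ^ 2) from funext fun x => by ring]
    rw [quad_integral, quad_integral]
    ring
  · have h1 : (0:ℝ) < (xu - xl) ^ 2 := pow_pos (sub_pos.mpr hx) 2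
    have h2 : (0:ℝ) < (yu - yl) ^ 2 := pow_pos (sub_pos.mpr hy) 2
    nlinarith
end

section
/- Let X ⊆ ℝ be closed and bounded and F : conv(X) → ℝ convex. For x̄ ∈ conv(X) \ X define x̄₋ = max{x ∈ X : x < x̄} and x̄₊ = min{x ∈ X : x > x̄}, and define F_X on conv(X) by F_X(x) = F(x) if x ∈ X, and F_X(x) = λF(x₋) + (1−λ)F(x₊) when x ∉ X with x = λx₋ + (1−λ)x₊, λ ∈ (0,1). Then the convex hull of the epigraph of F restricted to X equals the epigraph of F_X over conv(X): conv({(x,z) : x ∈ X, z ≥ F(x)}) = {(x,z) : x ∈ conv(X), z ≥ F_X(x)}. -/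
/-!
Over a point `x` of `X` the hull of the epigraph is cut out by the epigraph of `F` itself, which
is convex. Over a gap `(x₋, x₊)` of `X` the secant of `F` through `x₋` and `x₊` lies below `F`
on all of `X` by convexity, so the hull lies above that secant; conversely every point above the
secant lies on a vertical translate of the chord joining `(x₋, F x₋)` and `(x₊, F x₊)`.
-/

open Classical

/-- The "secant-filled" version `F_X` of `F` over the gaps of `X`: on `X` it
agrees with `F`, and on a gap it is the linear interpolation between the values
of `F` at the nearest points `x₋ = max {y ∈ X | y < x}` and
`x₊ = min {y ∈ X | y > x}` of `X` on either side. -/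
noncomputable def secantFill (X : Set ℝ) (F : ℝ → ℝ) (x : ℝ) : ℝ :=
  if x ∈ X then F x
  else
    (((sInf {y | y ∈ X ∧ x < y}) - x) * F (sSup {y | y ∈ X ∧ y < x}) +
        (x - (sSup {y | y ∈ X ∧ y < x})) * F (sInf {y | y ∈ X ∧ x < y})) /
      ((sInf {y | y ∈ X ∧ x < y}) - (sSup {y | y ∈ X ∧ y < x}))

open Set

section OrderedHull

variable {𝕜 E : Type*} [Semiring 𝕜] [PartialOrder 𝕜] [AddCommMonoid E] [LinearOrder E]
  [IsOrderedAddMonoid E] [Module 𝕜 E] [PosSMulMono 𝕜 E]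

lemma convexHull_subset_upperClosure (X : Set E) : convexHull 𝕜 X ⊆ upperClosure X :=
  convexHull_min subset_upperClosure (upperClosure X).upper.ordConnected.convex

lemma convexHull_subset_lowerClosure (X : Set E) : convexHull 𝕜 X ⊆ lowerClosure X :=
  convexHull_min subset_lowerClosure (lowerClosure X).lower.ordConnected.convex

end OrderedHull

lemma ConvexOn.add_slope_mul_sub_le {s : Set ℝ} {f : ℝ → ℝ} (hf : ConvexOn ℝ s f)
    {a b y : ℝ} (ha : a ∈ s) (hb : b ∈ s) (hy : y ∈ s) (hab : a < b) (hyab : y ∉ Ioo a b) :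
    f a + slope f a b * (y - a) ≤ f y := by
  have hfy : f y = f a + (y - a) * slope f a y := by
    rw [← smul_eq_mul, sub_smul_slope, vsub_eq_sub, add_sub_cancel]
  rw [hfy, mul_comm, add_le_add_iff_left]
  rcases lt_trichotomy y a with hya | rfl | hay
  · exact mul_le_mul_of_nonpos_left
      (hf.slope_mono ha ⟨hy, hya.ne⟩ ⟨hb, hab.ne'⟩ (hya.trans hab).le) (sub_nonpos.2 hya.le)
  · simp
  · have hby : b ≤ y := not_lt.1 fun hyb => hyab ⟨hay, hyb⟩
    exact mul_le_mul_of_nonneg_left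
      (hf.slope_mono ha ⟨hb, hab.ne'⟩ ⟨hy, hay.ne'⟩ hby) (sub_nonneg.2 hay.le)

lemma convexHull_epigraph_subset_epigraph {E : Type*} [AddCommGroup E] [Module ℝ E]
    {X s : Set E} {F g : E → ℝ} (hg : ConvexOn ℝ s g) (hXs : X ⊆ s) (hgF : ∀ x ∈ X, g x ≤ F x) :
    convexHull ℝ {p : E × ℝ | p.1 ∈ X ∧ F p.1 ≤ p.2} ⊆ {p | p.1 ∈ s ∧ g p.1 ≤ p.2} :=
  convexHull_min (fun _ hp => ⟨hXs hp.1, (hgF _ hp.1).trans hp.2⟩) hg.convex_epigraph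

lemma convexOn_univ_add_mul_sub (c m a : ℝ) : ConvexOn ℝ univ fun y => c + m * (y - a) :=
  ⟨convex_univ, fun x _ y _ s t _ _ hst => le_of_eq <| by
    simp only [smul_eq_mul]; linear_combination (m * a - c) * hst⟩

lemma mk_add_slope_mul_sub_mem_segment (f : ℝ → ℝ) {a b x : ℝ} (hab : a < b)
    (hx : x ∈ Icc a b) (c : ℝ) :
    (x, f a + slope f a b * (x - a) + c) ∈ segment ℝ (a, f a + c) (b, f b + c) := by
  have hba : b - a ≠ 0 := sub_ne_zero.2 hab.ne'
  refine ⟨(b - x) / (b - a), (x - a) / (b - a), div_nonneg (sub_nonneg.2 hx.2) (sub_pos.2 hab).le,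
    div_nonneg (sub_nonneg.2 hx.1) (sub_pos.2 hab).le, by field_simp; ring, ?_⟩
  simp only [Prod.smul_mk, Prod.mk_add_mk, smul_eq_mul, slope_def_field, Prod.mk.injEq]
  constructor <;> field_simp <;> ring

/-- The point `x₋` of the paper; a junk value (`sSup ∅ = 0`) unless `X` has points below `x`. -/
noncomputable def lowerNeighbor (X : Set ℝ) (x : ℝ) : ℝ := sSup {y | y ∈ X ∧ y < x}

noncomputable def upperNeighbor (X : Set ℝ) (x : ℝ) : ℝ := sInf {y | y ∈ X ∧ x < y}

section Neighbors

variable {X : Set ℝ} {x : ℝ}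

lemma le_lowerNeighbor {y : ℝ} (hy : y ∈ X) (hyx : y < x) : y ≤ lowerNeighbor X x :=
  le_csSup ⟨x, fun _ hz => hz.2.le⟩ ⟨hy, hyx⟩

lemma upperNeighbor_le {y : ℝ} (hy : y ∈ X) (hxy : x < y) : upperNeighbor X x ≤ y :=
  csInf_le ⟨x, fun _ hz => hz.2.le⟩ ⟨hy, hxy⟩

lemma lowerNeighbor_mem (hX : IsClosed X) (hx : ∃ y ∈ X, y < x) : lowerNeighbor X x ∈ X :=
  hX.closure_subset_iff.2 (fun _ hy => hy.1) (csSup_mem_closure hx ⟨x, fun _ hy => hy.2.le⟩)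

lemma upperNeighbor_mem (hX : IsClosed X) (hx : ∃ y ∈ X, x < y) : upperNeighbor X x ∈ X :=
  hX.closure_subset_iff.2 (fun _ hy => hy.1) (csInf_mem_closure hx ⟨x, fun _ hy => hy.2.le⟩)

lemma lowerNeighbor_lt (hX : IsClosed X) (hx : ∃ y ∈ X, y < x) (hxX : x ∉ X) :
    lowerNeighbor X x < x :=
  (csSup_le hx fun _ hy => hy.2.le).lt_of_ne fun h => hxX (h ▸ lowerNeighbor_mem hX hx)

lemma lt_upperNeighbor (hX : IsClosed X) (hx : ∃ y ∈ X, x < y) (hxX : x ∉ X) :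
    x < upperNeighbor X x :=
  (le_csInf hx fun _ hy => hy.2.le).lt_of_ne' fun h => hxX (h ▸ upperNeighbor_mem hX hx)

lemma notMem_Ioo_lowerNeighbor_upperNeighbor (hxX : x ∉ X) {y : ℝ} (hy : y ∈ X) :
    y ∉ Ioo (lowerNeighbor X x) (upperNeighbor X x) := by
  rintro ⟨hay, hyb⟩
  rcases lt_trichotomy y x with hyx | rfl | hxy
  · exact (le_lowerNeighbor hy hyx).not_gt hay
  · exact hxX hy
  · exact (upperNeighbor_le hy hxy).not_gt hyb

lemma exists_mem_lt_of_mem_convexHull (hx : x ∈ convexHull ℝ X) (hxX : x ∉ X) :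
    ∃ y ∈ X, y < x :=
  let ⟨y, hy, hyx⟩ := convexHull_subset_upperClosure X hx
  ⟨y, hy, hyx.lt_of_ne fun h => hxX (h ▸ hy)⟩

lemma exists_mem_gt_of_mem_convexHull (hx : x ∈ convexHull ℝ X) (hxX : x ∉ X) :
    ∃ y ∈ X, x < y :=
  let ⟨y, hy, hxy⟩ := convexHull_subset_lowerClosure X hx
  ⟨y, hy, hxy.lt_of_ne' fun h => hxX (h ▸ hy)⟩

lemma lowerNeighbor_upperNeighbor_spec (hX : IsClosed X) (hx : x ∈ convexHull ℝ X) (hxX : x ∉ X) :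
    lowerNeighbor X x ∈ X ∧ upperNeighbor X x ∈ X ∧
      lowerNeighbor X x < x ∧ x < upperNeighbor X x :=
  have hlt := exists_mem_lt_of_mem_convexHull hx hxX
  have hgt := exists_mem_gt_of_mem_convexHull hx hxX
  ⟨lowerNeighbor_mem hX hlt, upperNeighbor_mem hX hgt, lowerNeighbor_lt hX hlt hxX,
    lt_upperNeighbor hX hgt hxX⟩

end Neighbors

lemma secantFill_of_mem {X : Set ℝ} {x : ℝ} (F : ℝ → ℝ) (hx : x ∈ X) : secantFill X F x = F x :=
  if_pos hx

lemma secantFill_of_notMem {X : Set ℝ} {x : ℝ} (F : ℝ → ℝ) (hx : x ∉ X)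
    (hne : lowerNeighbor X x ≠ upperNeighbor X x) :
    secantFill X F x =
      F (lowerNeighbor X x) + slope F (lowerNeighbor X x) (upperNeighbor X x) *
        (x - lowerNeighbor X x) := by
  have hba : upperNeighbor X x - lowerNeighbor X x ≠ 0 := sub_ne_zero.2 hne.symm
  rw [secantFill, if_neg hx, slope_def_field]
  change ((upperNeighbor X x - x) * F (lowerNeighbor X x) +
    (x - lowerNeighbor X x) * F (upperNeighbor X x)) / (upperNeighbor X x - lowerNeighbor X x) = _
  field_simp
  ring

theorem convexHull_epigraph_eq_epigraph_secantFill_general (X : Set ℝ)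
    (hX : IsClosed X)
    (F : ℝ → ℝ) (hF : ConvexOn ℝ (convexHull ℝ X) F) :
    convexHull ℝ {p : ℝ × ℝ | p.1 ∈ X ∧ F p.1 ≤ p.2} =
      {p : ℝ × ℝ | p.1 ∈ convexHull ℝ X ∧ secantFill X F p.1 ≤ p.2} := by
  refine Subset.antisymm (fun q hq => ?_) (fun q ⟨hq₁, hq⟩ => ?_)
  · obtain ⟨hq₁, hFq⟩ :=
      convexHull_epigraph_subset_epigraph hF (subset_convexHull ℝ X) (fun _ _ => le_rfl) hq
    refine ⟨hq₁, ?_⟩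
    by_cases hqX : q.1 ∈ X
    · rwa [secantFill_of_mem F hqX]
    obtain ⟨ha, hb, hax, hxb⟩ := lowerNeighbor_upperNeighbor_spec hX hq₁ hqX
    set a := lowerNeighbor X q.1
    set b := upperNeighbor X q.1
    have hsecant_le (y : ℝ) (hy : y ∈ X) : F a + slope F a b * (y - a) ≤ F y :=
      hF.add_slope_mul_sub_le (subset_convexHull ℝ X ha) (subset_convexHull ℝ X hb)
        (subset_convexHull ℝ X hy) (hax.trans hxb) (notMem_Ioo_lowerNeighbor_upperNeighbor hqX hy)
    rw [secantFill_of_notMem F hqX (hax.trans hxb).ne]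
    exact (convexHull_epigraph_subset_epigraph (convexOn_univ_add_mul_sub _ _ _)
      (subset_univ X) hsecant_le hq).2
  · by_cases hqX : q.1 ∈ X
    · exact subset_convexHull ℝ _ ⟨hqX, by rwa [secantFill_of_mem F hqX] at hq⟩
    obtain ⟨ha, hb, hax, hxb⟩ := lowerNeighbor_upperNeighbor_spec hX hq₁ hqX
    have hδ : 0 ≤ q.2 - secantFill X F q.1 := sub_nonneg.2 hq
    have hseg := mk_add_slope_mul_sub_mem_segment F (hax.trans hxb) ⟨hax.le, hxb.le⟩
      (q.2 - secantFill X F q.1)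
    rw [← secantFill_of_notMem F hqX (hax.trans hxb).ne, add_sub_cancel] at hseg
    exact segment_subset_convexHull (s := {p : ℝ × ℝ | p.1 ∈ X ∧ F p.1 ≤ p.2})
      ⟨ha, le_add_of_nonneg_right hδ⟩ ⟨hb, le_add_of_nonneg_right hδ⟩ hseg

/-- For a closed bounded set `X ⊆ ℝ` and a convex function `F` on `conv(X)`,
the convex hull of the epigraph of `F` over `X` equals the epigraph of the
secant-filled function `F_X` over `conv(X)`. -/
theorem convexHull_epigraph_eq_epigraph_secantFill (X : Set ℝ)
    (hX : IsClosed X) (hB : Bornology.IsBounded X)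
    (F : ℝ → ℝ) (hF : ConvexOn ℝ (convexHull ℝ X) F) :
    convexHull ℝ {p : ℝ × ℝ | p.1 ∈ X ∧ F p.1 ≤ p.2} =
      {p : ℝ × ℝ | p.1 ∈ convexHull ℝ X ∧ secantFill X F p.1 ≤ p.2} :=
  convexHull_epigraph_eq_epigraph_secantFill_general X hX F hF
end
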